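/- arXiv:2312.16690 — 3 statements merged into one kernel-verified Lean document; each statement's English description precedes it below -/
import Mathlib

section
/- Let t ≥ 0 and let a, b ∈ ℝ with a ≠ 0. Then |∫₀ᵗ e^{is(a+b)} ds − (e^{ita} − 1)/(ia) − ib·∫₀ᵗ s e^{isa} ds| ≤ t³b²/6. -/
/-!
Write `e(x) = exp (i x)`. Since `e(s (a + b)) = e(s a) e(s b)` and `|e(s a)| = 1`, the error is the
integral over `[0, t]` of `e(s a) (e(s b) - 1 - i s b)`, whose modulus is at most `(s b)² / 2` by
the second-order Taylor bound for `e` on the real line; integrating `s² b² / 2` gives `t³ b² / 6`.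
-/

open MeasureTheory Complex intervalIntegral

theorem norm_integral_le_of_norm_le_mul_pow {E : Type*} [NormedAddCommGroup E] [NormedSpace ℝ E]
    {f : ℝ → E} {C t : ℝ} (n : ℕ) (ht : 0 ≤ t) (hf : ∀ s ∈ Set.Icc 0 t, ‖f s‖ ≤ C * s ^ n) :
    ‖∫ s in (0 : ℝ)..t, f s‖ ≤ C * t ^ (n + 1) / (n + 1) := by
  calc ‖∫ s in (0 : ℝ)..t, f s‖ ≤ ∫ s in (0 : ℝ)..t, C * s ^ n :=
        norm_integral_le_of_norm_le ht
          (Filter.Eventually.of_forall fun s hs => hf s (Set.Ioc_subset_Icc_self hs))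
          (Continuous.intervalIntegrable (by fun_prop) _ _)
    _ = C * t ^ (n + 1) / (n + 1) := by
        rw [intervalIntegral.integral_const_mul, integral_pow]
        ring

/-- Rescaling `[0, x]` to `[0, 1]`: `exp (i x) - 1 - i x = ∫₀¹ i x (exp (i u x) - 1) du`, and the
integrand has modulus at most `x² u`. -/
theorem Complex.norm_exp_I_mul_ofReal_sub_one_sub_le (x : ℝ) :
    ‖exp (I * x) - 1 - I * x‖ ≤ x ^ 2 / 2 := by
  have hderiv : ∀ u : ℝ, HasDerivAt (fun u : ℝ => exp (I * ↑(u * x)) - I * ↑(u * x))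
      (I * x * (exp (I * ↑(u * x)) - 1)) u := by
    intro u
    have hux : HasDerivAt (fun u : ℝ => I * ↑(u * x)) (I * x) u := by
      simpa using (((hasDerivAt_id u).mul_const x).ofReal_comp).const_mul I
    exact (hux.cexp.sub hux).congr_deriv (by ring)
  have hftc : exp (I * x) - 1 - I * x = ∫ u in (0 : ℝ)..1, I * x * (exp (I * ↑(u * x)) - 1) := by
    rw [integral_eq_sub_of_hasDerivAt (fun u _ => hderiv u)
      (Continuous.intervalIntegrable (by fun_prop) _ _)]
    simp only [one_mul, zero_mul, ofReal_zero, mul_zero, exp_zero]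
    ring
  have hbound := norm_integral_le_of_norm_le_mul_pow 1 zero_le_one
    (f := fun u : ℝ => I * x * (exp (I * ↑(u * x)) - 1)) (C := x ^ 2) fun u hu => by
      calc ‖I * x * (exp (I * ↑(u * x)) - 1)‖ ≤ |x| * |u * x| := by
            rw [norm_mul, norm_mul, norm_I, one_mul, norm_real, Real.norm_eq_abs]
            exact mul_le_mul_of_nonneg_left Real.norm_exp_I_mul_ofReal_sub_one_le (abs_nonneg x)
        _ = x ^ 2 * u ^ 1 := by
            rw [abs_mul, abs_of_nonneg hu.1, ← sq_abs x]
            ring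
  rw [hftc]
  convert hbound using 1
  norm_num

theorem resonance_second_order_error (t a b : ℝ) (ht : 0 ≤ t) (ha : a ≠ 0) :
    ‖(∫ s in (0:ℝ)..t, Complex.exp (Complex.I * ((s : ℂ) * ((a : ℂ) + (b : ℂ))))) -
        (Complex.exp (Complex.I * (t : ℂ) * (a : ℂ)) - 1) / (Complex.I * (a : ℂ)) -
        Complex.I * (b : ℂ) *
          ∫ s in (0:ℝ)..t, (s : ℂ) * Complex.exp (Complex.I * ((s : ℂ) * (a : ℂ)))‖ ≤
      t ^ 3 * b ^ 2 / 6 := by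
  have hIa : I * a ≠ 0 := mul_ne_zero I_ne_zero (ofReal_ne_zero.mpr ha)
  have hdominant : (exp (I * t * a) - 1) / (I * a) = ∫ s in (0 : ℝ)..t, exp (I * (s * a)) := by
    have hcomm : ∀ s : ℝ, I * (s * a) = I * a * s := fun s => by ring
    simp_rw [hcomm, integral_exp_mul_complex hIa, ofReal_zero, mul_zero, exp_zero,
      mul_right_comm I (t : ℂ)]
  have hsplit : ∀ s : ℝ,
      exp (I * (s * (a + b))) - exp (I * (s * a)) - I * b * (s * exp (I * (s * a))) =
        exp (I * (s * a)) * (exp (I * ↑(s * b)) - 1 - I * ↑(s * b)) := by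
    intro s
    rw [ofReal_mul, mul_add, mul_add, exp_add]
    ring
  have hcont : ∀ {f : ℝ → ℂ}, Continuous f → IntervalIntegrable f volume 0 t :=
    fun hf => hf.intervalIntegrable _ _
  rw [hdominant, ← intervalIntegral.integral_const_mul,
    ← integral_sub (hcont (by fun_prop)) (hcont (by fun_prop)),
    ← integral_sub (hcont (by fun_prop)) (hcont (by fun_prop))]
  simp_rw [hsplit]
  convert norm_integral_le_of_norm_le_mul_pow 2 ht (C := b ^ 2 / 2) fun s _ => ?_ using 1
  · ring
  · rw [norm_mul, ← ofReal_mul, norm_exp_I_mul_ofReal, one_mul]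
    calc _ ≤ (s * b) ^ 2 / 2 := norm_exp_I_mul_ofReal_sub_one_sub_le (s * b)
      _ = b ^ 2 / 2 * s ^ 2 := by ring
end

section
/- Let d ≥ 1, t ≥ 0, and let k₁, k₂, k₃ ∈ ℤ^d with k₁ ≠ 0, and set k = −k₁ + k₂ + k₃. Then |∫₀ᵗ e^{is(‖k‖² + ‖k₁‖² − ‖k₂‖² − ‖k₃‖²)} ds − (e^{2it‖k₁‖²} − 1)/(2i‖k₁‖²)| ≤ t² · |⟨k₁, k₂ + k₃⟩ − ⟨k₂, k₃⟩|. -/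
/-!
Expanding `‖-k₁ + k₂ + k₃‖²` writes the phase as `A - B` with `A = 2‖k₁‖²` and
`B = 2(⟨k₁, k₂ + k₃⟩ - ⟨k₂, k₃⟩)`. The subtracted term is exactly `∫₀ᵗ e^{isA} ds`, and since
`x ↦ e^{ix}` is 1-Lipschitz the two integrands differ by at most `|B| |s|`, whose integral over
`[0, t]` is `|B| t² / 2`.
-/

open MeasureTheory

/-- The embedding of `ℤ^d` into the Euclidean space `ℝ^d`. -/
noncomputable def intVec {d : ℕ} (k : Fin d → ℤ) : EuclideanSpace ℝ (Fin d) :=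
  WithLp.toLp 2 (fun i => (k i : ℝ))

open Complex intervalIntegral

section IntVec

variable {d : ℕ}

lemma intVec_add (k l : Fin d → ℤ) : intVec (k + l) = intVec k + intVec l := by
  ext i
  simp [intVec]

lemma intVec_neg (k : Fin d → ℤ) : intVec (-k) = -intVec k := by
  ext i
  simp [intVec]

lemma intVec_ne_zero {k : Fin d → ℤ} (hk : k ≠ 0) : intVec k ≠ 0 := by
  refine fun h => hk (funext fun i => ?_)
  simpa [intVec] using congrArg (· i) h

end IntVec

lemma norm_neg_add_add_sq_add_sq_sub_sq_sub_sq {E : Type*} [NormedAddCommGroup E]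
    [InnerProductSpace ℝ E] (a b c : E) :
    ‖-a + b + c‖ ^ 2 + ‖a‖ ^ 2 - ‖b‖ ^ 2 - ‖c‖ ^ 2 =
      2 * ‖a‖ ^ 2 - 2 * (inner ℝ a (b + c) - inner ℝ b c) := by
  simp only [← real_inner_self_eq_norm_sq, inner_add_left, inner_add_right, inner_neg_left,
    inner_neg_right, real_inner_comm a b, real_inner_comm a c, real_inner_comm b c]
  ring

lemma norm_exp_I_mul_sub_exp_I_mul_le (x y : ℝ) :
    ‖cexp (I * x) - cexp (I * y)‖ ≤ |x - y| := by
  have h : cexp (I * x) - cexp (I * y) = cexp (I * y) * (cexp (I * ↑(x - y)) - 1) := by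
    rw [mul_sub, ← Complex.exp_add]
    push_cast
    ring_nf
  rw [h, norm_mul, Complex.norm_exp_I_mul_ofReal, one_mul]
  exact Real.norm_exp_I_mul_ofReal_sub_one_le

lemma abs_integral_abs_id (t : ℝ) : |∫ s in (0 : ℝ)..t, (|s|)| = t ^ 2 / 2 := by
  rcases le_total 0 t with ht | ht
  · have h : ∫ s in (0 : ℝ)..t, |s| = ∫ s in (0 : ℝ)..t, s :=
      integral_congr fun s hs => abs_of_nonneg (by rw [Set.uIcc_of_le ht] at hs; exact hs.1)
    rw [h, integral_id, zero_pow two_ne_zero, sub_zero, abs_of_nonneg (by positivity)]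
  · have h : ∫ s in (0 : ℝ)..t, |s| = ∫ s in (0 : ℝ)..t, -s :=
      integral_congr fun s hs => abs_of_nonpos (by rw [Set.uIcc_of_ge ht] at hs; exact hs.2)
    rw [h, intervalIntegral.integral_neg, integral_id, zero_pow two_ne_zero, sub_zero, abs_neg,
      abs_of_nonneg (by positivity)]

lemma integral_exp_I_mul (A t : ℝ) (hA : A ≠ 0) :
    ∫ s in (0 : ℝ)..t, cexp (I * A * s) = (cexp (I * A * t) - 1) / (I * A) := by
  simpa using integral_exp_mul_complex (a := 0) (b := t) (by simpa using hA : I * A ≠ 0)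

lemma norm_integral_exp_I_mul_sub_le {A : ℝ} (hA : A ≠ 0) (B t : ℝ) :
    ‖(∫ s in (0 : ℝ)..t, cexp (I * (s * ((A - B : ℝ) : ℂ)))) -
        (cexp (I * A * t) - 1) / (I * A)‖ ≤ |B| * t ^ 2 / 2 := by
  have hpointwise : ∀ s : ℝ, ‖cexp (I * (s * ((A - B : ℝ) : ℂ))) - cexp (I * A * s)‖ ≤
      |B| * |s| := fun s => by
    have h := norm_exp_I_mul_sub_exp_I_mul_le (s * (A - B)) (A * s)
    rw [show s * (A - B) - A * s = -(B * s) by ring, abs_neg, abs_mul] at h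
    convert h using 4 <;> push_cast <;> ring
  rw [← integral_exp_I_mul A t hA, ← intervalIntegral.integral_sub
    (Continuous.intervalIntegrable (by fun_prop) _ _)
    (Continuous.intervalIntegrable (by fun_prop) _ _)]
  calc _ ≤ |∫ s in (0 : ℝ)..t, (|B| * |s|)| :=
        norm_integral_le_abs_of_norm_le (ae_of_all _ hpointwise)
          (Continuous.intervalIntegrable (by fun_prop) _ _)
    _ = |B| * t ^ 2 / 2 := by
        rw [intervalIntegral.integral_const_mul, abs_mul, abs_abs, abs_integral_abs_id]
        ring

theorem nls_resonance_discretisation_error_general (d : ℕ) (t : ℝ)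
    (k₁ k₂ k₃ : Fin d → ℤ) (hk₁ : k₁ ≠ 0) (k : Fin d → ℤ) (hk : k = -k₁ + k₂ + k₃) :
    ‖(∫ s in (0:ℝ)..t,
          Complex.exp (Complex.I * ((s : ℂ) *
            ((‖intVec k‖ ^ 2 + ‖intVec k₁‖ ^ 2 - ‖intVec k₂‖ ^ 2 - ‖intVec k₃‖ ^ 2 : ℝ) : ℂ)))) -
        (Complex.exp (2 * Complex.I * (t : ℂ) * ((‖intVec k₁‖ ^ 2 : ℝ) : ℂ)) - 1) /
          (2 * Complex.I * ((‖intVec k₁‖ ^ 2 : ℝ) : ℂ))‖ ≤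
      t ^ 2 * |(inner ℝ (intVec k₁) (intVec k₂ + intVec k₃) : ℝ) -
        (inner ℝ (intVec k₂) (intVec k₃) : ℝ)| := by
  have hA : 2 * ‖intVec k₁‖ ^ 2 ≠ 0 := by
    have := norm_pos_iff.mpr (intVec_ne_zero hk₁)
    positivity
  rw [hk, intVec_add, intVec_add, intVec_neg, norm_neg_add_add_sq_add_sq_sub_sq_sub_sq]
  have key := norm_integral_exp_I_mul_sub_le hA
    (2 * (inner ℝ (intVec k₁) (intVec k₂ + intVec k₃) - inner ℝ (intVec k₂) (intVec k₃))) t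
  rw [abs_mul, abs_two] at key
  convert key using 3
  · push_cast
    ring_nf
  · ring

theorem nls_resonance_discretisation_error (d : ℕ) (hd : 1 ≤ d) (t : ℝ) (ht : 0 ≤ t)
    (k₁ k₂ k₃ : Fin d → ℤ) (hk₁ : k₁ ≠ 0) (k : Fin d → ℤ) (hk : k = -k₁ + k₂ + k₃) :
    ‖(∫ s in (0:ℝ)..t,
          Complex.exp (Complex.I * ((s : ℂ) *
            ((‖intVec k‖ ^ 2 + ‖intVec k₁‖ ^ 2 - ‖intVec k₂‖ ^ 2 - ‖intVec k₃‖ ^ 2 : ℝ) : ℂ)))) -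
        (Complex.exp (2 * Complex.I * (t : ℂ) * ((‖intVec k₁‖ ^ 2 : ℝ) : ℂ)) - 1) /
          (2 * Complex.I * ((‖intVec k₁‖ ^ 2 : ℝ) : ℂ))‖ ≤
      t ^ 2 * |(inner ℝ (intVec k₁) (intVec k₂ + intVec k₃) : ℝ) -
        (inner ℝ (intVec k₂) (intVec k₃) : ℝ)| :=
  nls_resonance_discretisation_error_general d t k₁ k₂ k₃ hk₁ k hk
end

section
/- Let t ≥ 0 and Q, R, S ∈ ℝ. Then |∫₀ᵗ e^{isQ} (∫₀ˢ e^{is₁R} (∫₀^{s₁} e^{is₂S} ds₂) ds₁) ds − t³/6| ≤ (|Q| + |R| + |S|) · t⁴/8. -/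
/-!
Peel off one oscillatory factor at a time. If `‖f s - a sⁿ‖ ≤ C sⁿ⁺¹` on `[0, t]`, then writing
`e^{isQ} f s - a sⁿ = e^{isQ} (f s - a sⁿ) + (e^{isQ} - 1) a sⁿ` and using `|e^{ix} - 1| ≤ |x|`
gives `‖∫₀ᵗ e^{isQ} f s ds - a tⁿ⁺¹/(n+1)‖ ≤ (|Q| |a| + C) tⁿ⁺²/(n+2)`. Starting from `f = 1`, three
applications give the errors `|S| t²/2`, `(|R| + |S|/2) t³/3` and
`(|Q|/2 + (|R| + |S|/2)/3) t⁴/4 ≤ (|Q| + |R| + |S|) t⁴/8`.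
-/

open MeasureTheory

noncomputable def duhamelIntegral (Q : ℝ) (f : ℝ → ℂ) (t : ℝ) : ℂ :=
  ∫ s in (0:ℝ)..t, Complex.exp (Complex.I * ((s : ℂ) * (Q : ℂ))) * f s

theorem continuous_duhamelIntegral (Q : ℝ) {f : ℝ → ℂ} (hf : Continuous f) :
    Continuous (duhamelIntegral Q f) :=
  intervalIntegral.continuous_primitive
    (fun _ _ => (by fun_prop : Continuous _).intervalIntegrable _ _) 0

theorem norm_exp_I_mul_ofReal_mul_sub_one_le (s Q : ℝ) :
    ‖Complex.exp (Complex.I * ((s : ℂ) * (Q : ℂ))) - 1‖ ≤ |Q| * |s| := by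
  rw [← Complex.ofReal_mul, mul_comm |Q|, ← abs_mul]
  exact Real.norm_exp_I_mul_ofReal_sub_one_le

theorem integral_ofReal_mul_pow (a t : ℝ) (n : ℕ) :
    ∫ s in (0:ℝ)..t, (a : ℂ) * (s : ℂ) ^ n = a * (t : ℂ) ^ (n + 1) / (n + 1) := by
  simp only [← Complex.ofReal_pow, ← Complex.ofReal_mul, intervalIntegral.integral_ofReal,
    intervalIntegral.integral_const_mul, integral_pow]
  push_cast
  ring

theorem norm_duhamelIntegral_sub_le {f : ℝ → ℂ} {t Q a C : ℝ} {n : ℕ} (ht : 0 ≤ t)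
    (hf : IntervalIntegrable f volume 0 t)
    (hf_le : ∀ s ∈ Set.Icc 0 t, ‖f s - a * (s : ℂ) ^ n‖ ≤ C * s ^ (n + 1)) :
    ‖duhamelIntegral Q f t - a * (t : ℂ) ^ (n + 1) / (n + 1)‖ ≤
      (|Q| * |a| + C) * t ^ (n + 2) / (n + 2) := by
  have h_pointwise : ∀ s ∈ Set.Icc 0 t,
      ‖Complex.exp (Complex.I * ((s : ℂ) * (Q : ℂ))) * f s - a * (s : ℂ) ^ n‖ ≤
        (|Q| * |a| + C) * s ^ (n + 1) := by
    rintro s ⟨hs₀, hst⟩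
    set e := Complex.exp (Complex.I * ((s : ℂ) * (Q : ℂ))) with he_def
    have he : ‖e‖ = 1 := by
      rw [he_def, ← Complex.ofReal_mul]
      exact Complex.norm_exp_I_mul_ofReal _
    calc ‖e * f s - a * (s : ℂ) ^ n‖
        = ‖e * (f s - a * (s : ℂ) ^ n) + (e - 1) * (a * (s : ℂ) ^ n)‖ := by ring_nf
      _ ≤ ‖e‖ * ‖f s - a * (s : ℂ) ^ n‖ + ‖e - 1‖ * (|a| * s ^ n) := by
        refine (norm_add_le _ _).trans_eq ?_
        simp [abs_of_nonneg hs₀]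
      _ ≤ C * s ^ (n + 1) + |Q| * s * (|a| * s ^ n) := by
        rw [he, one_mul]
        gcongr
        · exact hf_le s ⟨hs₀, hst⟩
        · simpa [abs_of_nonneg hs₀] using norm_exp_I_mul_ofReal_mul_sub_one_le s Q
      _ = (|Q| * |a| + C) * s ^ (n + 1) := by ring
  rw [duhamelIntegral, ← integral_ofReal_mul_pow, ← intervalIntegral.integral_sub]
  · calc _ ≤ ∫ s in (0:ℝ)..t, (|Q| * |a| + C) * s ^ (n + 1) :=
          intervalIntegral.norm_integral_le_of_norm_le ht
            (.of_forall fun s hs => h_pointwise s (Set.Ioc_subset_Icc_self hs))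
            ((by fun_prop : Continuous _).intervalIntegrable _ _)
      _ = _ := by rw [intervalIntegral.integral_const_mul, integral_pow]; push_cast; ring
  · exact hf.continuousOn_mul (by fun_prop)
  · exact (by fun_prop : Continuous _).intervalIntegrable _ _

theorem triple_iterated_oscillatory_error (t Q R S : ℝ) (ht : 0 ≤ t) :
    ‖(∫ s in (0:ℝ)..t, Complex.exp (Complex.I * ((s : ℂ) * (Q : ℂ))) *
          ∫ s₁ in (0:ℝ)..s, Complex.exp (Complex.I * ((s₁ : ℂ) * (R : ℂ))) *
            ∫ s₂ in (0:ℝ)..s₁, Complex.exp (Complex.I * ((s₂ : ℂ) * (S : ℂ)))) -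
        ((t : ℂ) ^ 3 / 6)‖ ≤ (|Q| + |R| + |S|) * t ^ 4 / 8 := by
  have h₁ (s : ℝ) (hs : 0 ≤ s) : ‖duhamelIntegral S 1 s - s‖ ≤ |S| * s ^ 2 / 2 := by
    simpa using norm_duhamelIntegral_sub_le (f := 1) (Q := S) (a := 1) (C := 0) (n := 0) hs
      intervalIntegrable_const (by simp)
  have h₂ (s : ℝ) (hs : 0 ≤ s) :
      ‖duhamelIntegral R (duhamelIntegral S 1) s - (s : ℂ) ^ 2 / 2‖ ≤
        (|R| + |S| / 2) * s ^ 3 / 3 := by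
    have h := norm_duhamelIntegral_sub_le (Q := R) (a := 1) (C := |S| / 2) (n := 1) hs
      ((continuous_duhamelIntegral S continuous_one).intervalIntegrable _ _)
      fun s hs => by simpa [div_mul_eq_mul_div] using h₁ s hs.1
    norm_num at h
    exact h
  have h₃ := norm_duhamelIntegral_sub_le (Q := Q) (a := 1 / 2) (C := (|R| + |S| / 2) / 3)
    (n := 2) ht
    ((continuous_duhamelIntegral R
      (continuous_duhamelIntegral S continuous_one)).intervalIntegrable _ _)
    fun s hs => by convert h₂ s hs.1 using 2 <;> push_cast <;> ring
  calc _ = ‖duhamelIntegral Q (duhamelIntegral R (duhamelIntegral S 1)) t -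
        (1 / 2 : ℝ) * (t : ℂ) ^ (2 + 1) / (2 + 1)‖ := by
        simp only [duhamelIntegral, Pi.one_apply, mul_one]; congr 2; push_cast; ring
    _ ≤ _ := h₃
    _ ≤ (|Q| + |R| + |S|) * t ^ 4 / 8 := by
      rw [abs_of_pos (by norm_num : (0:ℝ) < 1 / 2)]
      have : 0 ≤ t ^ 4 := by positivity
      nlinarith [abs_nonneg Q, abs_nonneg R, abs_nonneg S]
end
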